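/- Bi-Lipschitz property of a level set function along its gradient direction (relation (2.3) of the paper): Let U ⊆ ℝⁿ be open, x ∈ U, and r > 0 with the closed ball of radius r around x contained in U. Let φ : ℝⁿ → ℝ be differentiable on U with m ≤ ‖∇φ(y)‖ ≤ M for all y ∈ U (with constants 0 < m ≤ M) and with K-Lipschitz gradient on U: ‖∇φ(y) − ∇φ(z)‖ ≤ K‖y − z‖ for y, z ∈ U (K > 0). Set δ := min( m² / (2 K M²), r / M ). Then for all ε, ε̃ ∈ [−δ, δ]: (m²/2) · |ε − ε̃| ≤ |φ(x + ε ∇φ(x)) − φ(x + ε̃ ∇φ(x))| ≤ 2 M² · |ε − ε̃|. -/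

import Mathlib

/-!
On the line `s ↦ x + s • ∇φ(x)` the derivative of `φ` is `⟪∇φ(x + s • ∇φ(x)), ∇φ(x)⟫`. By the
Lipschitz bound it differs from `‖∇φ(x)‖² ∈ [m², M²]` by at most `K |s| ‖∇φ(x)‖² ≤ m² / 2` when
`|s| ≤ δ`, so it stays in `[m² / 2, 2 M²]`, and the mean value theorem gives both inequalities.
-/

open Metric Set

theorem Convex.mul_abs_sub_le_abs_image_sub_le {D : Set ℝ} (hD : Convex ℝ D) {f f' : ℝ → ℝ}
    (hf : ∀ t ∈ D, HasDerivAt f (f' t) t) {a b : ℝ} (ha : 0 ≤ a)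
    (hf' : ∀ t ∈ D, f' t ∈ Icc a b) {s t : ℝ} (hs : s ∈ D) (ht : t ∈ D) :
    a * |s - t| ≤ |f s - f t| ∧ |f s - f t| ≤ b * |s - t| := by
  wlog hts : t ≤ s generalizing s t
  · rw [abs_sub_comm s, abs_sub_comm (f s)]
    exact this ht hs (le_of_not_ge hts)
  have hcont : ContinuousOn f D := fun t ht => (hf t ht).continuousAt.continuousWithinAt
  have hdiff : DifferentiableOn ℝ f (interior D) := fun t ht =>
    (hf t (interior_subset ht)).differentiableAt.differentiableWithinAt
  have hderiv : ∀ t ∈ interior D, deriv f t = f' t := fun t ht =>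
    (hf t (interior_subset ht)).deriv
  have hlower : a * (s - t) ≤ f s - f t :=
    hD.mul_sub_le_image_sub_of_le_deriv hcont hdiff
      (fun u hu => hderiv u hu ▸ (hf' u (interior_subset hu)).1) t ht s hs hts
  have hupper : f s - f t ≤ b * (s - t) :=
    hD.image_sub_le_mul_sub_of_deriv_le hcont hdiff
      (fun u hu => hderiv u hu ▸ (hf' u (interior_subset hu)).2) t ht s hs hts
  have hnonneg : 0 ≤ f s - f t := (mul_nonneg ha (sub_nonneg.2 hts)).trans hlower
  rw [abs_of_nonneg hnonneg, abs_of_nonneg (sub_nonneg.2 hts)]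
  exact ⟨hlower, hupper⟩

section InnerProductSpace

variable {E : Type*} [NormedAddCommGroup E] [InnerProductSpace ℝ E]

theorem HasGradientAt.hasDerivAt_comp_add_smul [CompleteSpace E] {φ : E → ℝ} {g x v : E} {t : ℝ}
    (h : HasGradientAt φ g (x + t • v)) :
    HasDerivAt (fun s : ℝ => φ (x + s • v)) (inner ℝ g v) t := by
  have hline : HasDerivAt (fun s : ℝ => x + s • v) v t := by
    simpa using ((hasDerivAt_id t).smul_const v).const_add x
  have := h.hasFDerivAt.comp_hasDerivAt t hline
  rw [InnerProductSpace.toDual_apply_apply] at this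
  exact this

theorem abs_inner_sub_norm_sq_le (g v : E) :
    |inner ℝ g v - ‖v‖ ^ 2| ≤ ‖g - v‖ * ‖v‖ := by
  rw [← real_inner_self_eq_norm_sq, ← inner_sub_left]
  exact abs_real_inner_le_norm _ _

theorem inner_mem_Icc_of_norm_sub_mul_le {g v : E} {m M : ℝ} (hm : 0 ≤ m) (hmv : m ≤ ‖v‖)
    (hvM : ‖v‖ ≤ M) (hgv : ‖g - v‖ * ‖v‖ ≤ m ^ 2 / 2) :
    inner ℝ g v ∈ Icc (m ^ 2 / 2) (2 * M ^ 2) := by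
  have hclose := abs_le.1 ((abs_inner_sub_norm_sq_le g v).trans hgv)
  have hm2 : m ^ 2 ≤ ‖v‖ ^ 2 := pow_le_pow_left₀ hm hmv 2
  have hM2 : ‖v‖ ^ 2 ≤ M ^ 2 := pow_le_pow_left₀ (norm_nonneg v) hvM 2
  constructor <;> linarith [hclose.1, hclose.2]

end InnerProductSpace

theorem levelset_biLipschitz_along_gradient_general {n : ℕ}
    (U : Set (EuclideanSpace ℝ (Fin n)))
    (x : EuclideanSpace ℝ (Fin n)) (r : ℝ) (hr : 0 < r)
    (hball : closedBall x r ⊆ U)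
    (φ : EuclideanSpace ℝ (Fin n) → ℝ)
    (hdiff : ∀ y ∈ U, DifferentiableAt ℝ φ y)
    (m M K : ℝ) (hm : 0 < m) (hmM : m ≤ M) (hK : 0 < K)
    (hgrad_lb : ∀ y ∈ U, m ≤ ‖gradient φ y‖)
    (hgrad_ub : ∀ y ∈ U, ‖gradient φ y‖ ≤ M)
    (hlip : ∀ y ∈ U, ∀ z ∈ U, ‖gradient φ y - gradient φ z‖ ≤ K * ‖y - z‖)
    (δ : ℝ) (hδ : δ = min (m ^ 2 / (2 * K * M ^ 2)) (r / M))
    (ε ε' : ℝ) (hε : ε ∈ Icc (-δ) δ) (hε' : ε' ∈ Icc (-δ) δ) :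
    m ^ 2 / 2 * |ε - ε'| ≤
        |φ (x + ε • gradient φ x) - φ (x + ε' • gradient φ x)| ∧
      |φ (x + ε • gradient φ x) - φ (x + ε' • gradient φ x)| ≤
        2 * M ^ 2 * |ε - ε'| := by
  have hM : 0 < M := hm.trans_le hmM
  have hxU : x ∈ U := hball (mem_closedBall_self hr.le)
  set v := gradient φ x
  have hδM : δ * M ≤ r := (le_div_iff₀ hM).1 (hδ ▸ min_le_right _ _)
  have hδKM : δ * (2 * K * M ^ 2) ≤ m ^ 2 :=
    (le_div_iff₀ (by positivity)).1 (hδ ▸ min_le_left _ _)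
  have hstep : ∀ t ∈ Icc (-δ) δ, ‖t • v‖ ≤ δ * M := fun t ht => by
    rw [norm_smul, Real.norm_eq_abs]
    exact mul_le_mul (abs_le.2 ht) (hgrad_ub x hxU) (norm_nonneg v)
      ((abs_nonneg t).trans (abs_le.2 ht))
  have hmem : ∀ t ∈ Icc (-δ) δ, x + t • v ∈ U := fun t ht =>
    hball (by simpa [dist_eq_norm] using (hstep t ht).trans hδM)
  have hslope : ∀ t ∈ Icc (-δ) δ,
      inner ℝ (gradient φ (x + t • v)) v ∈ Icc (m ^ 2 / 2) (2 * M ^ 2) := by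
    intro t ht
    refine inner_mem_Icc_of_norm_sub_mul_le hm.le (hgrad_lb x hxU) (hgrad_ub x hxU) ?_
    calc ‖gradient φ (x + t • v) - v‖ * ‖v‖ ≤ (K * ‖t • v‖) * M := by
          gcongr
          · simpa using hlip _ (hmem t ht) x hxU
          · exact hgrad_ub x hxU
      _ ≤ K * (δ * M) * M := by gcongr; exact hstep t ht
      _ ≤ m ^ 2 / 2 := by linarith
  exact (convex_Icc (-δ) δ).mul_abs_sub_le_abs_image_sub_le
    (fun t ht => (hdiff _ (hmem t ht)).hasGradientAt.hasDerivAt_comp_add_smul)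
    (by positivity) hslope hε hε'

/-- Bi-Lipschitz property of a level set function along its gradient direction:
if `m ≤ ‖∇φ‖ ≤ M` on `U`, the gradient is `K`-Lipschitz on `U`, and
`δ = min (m²/(2KM²)) (r/M)`, then for `ε, ε̃ ∈ [-δ, δ]` one has
`(m²/2)|ε - ε̃| ≤ |φ(x + ε∇φ(x)) - φ(x + ε̃∇φ(x))| ≤ 2M²|ε - ε̃|`. -/
theorem levelset_biLipschitz_along_gradient {n : ℕ}
    (U : Set (EuclideanSpace ℝ (Fin n))) (hU : IsOpen U)
    (x : EuclideanSpace ℝ (Fin n)) (r : ℝ) (hr : 0 < r)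
    (hball : closedBall x r ⊆ U)
    (φ : EuclideanSpace ℝ (Fin n) → ℝ)
    (hdiff : ∀ y ∈ U, DifferentiableAt ℝ φ y)
    (m M K : ℝ) (hm : 0 < m) (hmM : m ≤ M) (hK : 0 < K)
    (hgrad_lb : ∀ y ∈ U, m ≤ ‖gradient φ y‖)
    (hgrad_ub : ∀ y ∈ U, ‖gradient φ y‖ ≤ M)
    (hlip : ∀ y ∈ U, ∀ z ∈ U, ‖gradient φ y - gradient φ z‖ ≤ K * ‖y - z‖)
    (δ : ℝ) (hδ : δ = min (m ^ 2 / (2 * K * M ^ 2)) (r / M))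
    (ε ε' : ℝ) (hε : ε ∈ Icc (-δ) δ) (hε' : ε' ∈ Icc (-δ) δ) :
    m ^ 2 / 2 * |ε - ε'| ≤
        |φ (x + ε • gradient φ x) - φ (x + ε' • gradient φ x)| ∧
      |φ (x + ε • gradient φ x) - φ (x + ε' • gradient φ x)| ≤
        2 * M ^ 2 * |ε - ε'| :=
  levelset_biLipschitz_along_gradient_general U x r hr hball φ hdiff m M K hm hmM hK hgrad_lb
    hgrad_ub hlip δ hδ ε ε' hε hε'
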